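/- arXiv:2209.12473 — 2 statements merged into one kernel-verified Lean document; each statement's English description precedes it below -/
import Mathlib

section
/- Suppose the positive sequence (α_k) satisfies α_k/α_n ≤ λ^{n−k} k!/n! for all 0 ≤ k ≤ n, where λ > 0. Let t_{n,n−2k} = (−1)^k 2^{n−2k−1} n (n−k−1)!/(k!(n−2k)!) be the nonzero Chebyshev coefficients. Then for every n ≥ 1, (1/4)·4^n·α_n ≤ ∑_{k=0}^{⌊n/2⌋} α_{n−2k} t_{n,n−2k}^2 ≤ (1/2)·e^{λ²/16}·4^n·α_n. -/
open Nat

/-- The nonzero coefficients of the degree-`n` Chebyshev polynomial of the first kind: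
`t_{n,n−2k} = (−1)^k 2^{n−2k−1} n (n−k−1)!/(k!(n−2k)!)`. -/
noncomputable def chebCoeff (n k : ℕ) : ℝ :=
  (-1 : ℝ) ^ k * (2 : ℝ) ^ ((n : ℤ) - 2 * k - 1) * (n : ℝ) * ((n - k - 1)! : ℝ)
    / ((k ! : ℝ) * ((n - 2 * k)! : ℝ))

/-!
Squaring the coefficient gives
`t_{n,n-2k}² = 4ⁿ/(4·16ᵏ) · (n (n-k-1)!)² / (k! (n-2k)!)²`, and the hypothesis with `k ↦ n - 2k`
gives `α_{n-2k} ≤ α_n λ^{2k} (n-2k)!/n!`. The factorials cancel up to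
`(n (n-k-1)!)² ≤ 2 n! (n-2k)!`, so the `k`-th term is at most `4ⁿ/4 · α_n · 2 (λ²/16)ᵏ/k!`, and
summing against the exponential series gives the upper bound. The lower bound is the `k = 0` term,
which equals `4ⁿ/4 · α_n` because `n (n-1)! = n!`.
-/

theorem sq_mul_factorial_le_two_mul_factorial_mul_factorial {n k : ℕ} (hk : 2 * k ≤ n) :
    (n * (n - k - 1)!) ^ 2 ≤ 2 * n ! * (n - 2 * k)! := by
  rcases k with _ | j
  · rcases n with _ | n
    · simp
    · rw [show n + 1 - 0 - 1 = n by omega, show n + 1 - 2 * 0 = n + 1 by omega,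
        ← Nat.factorial_succ]
      nlinarith [Nat.zero_le ((n + 1)! * (n + 1)!)]
  · obtain ⟨m, rfl⟩ : ∃ m, n = m + 2 * j + 2 := ⟨n - 2 * j - 2, by omega⟩
    have hlow : (m + j)! = m ! * (m + j).descFactorial j := by
      simpa using (Nat.factorial_mul_descFactorial (n := m + j) (k := j) (by omega)).symm
    have hhigh : (m + 2 * j + 2)! =
        (m + j)! * ((m + 2 * j + 2) * ((m + 2 * j + 1) * (m + 2 * j).descFactorial j)) := by
      rw [← Nat.succ_descFactorial_succ, ← Nat.succ_descFactorial_succ,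
        ← Nat.factorial_mul_descFactorial (show j + 2 ≤ m + 2 * j + 2 by omega)]
      congr 2; omega
    have hmono : (m + j).descFactorial j ≤ (m + 2 * j).descFactorial j :=
      Nat.descFactorial_le _ (by omega)
    rw [show m + 2 * j + 2 - (j + 1) - 1 = m + j by omega,
      show m + 2 * j + 2 - 2 * (j + 1) = m by omega, hhigh, hlow]
    -- With `N = m + 2j + 2 ≥ 2`, cancelling `m!² (m+j)↓j` leaves
    -- `N · (m+j)↓j ≤ 2 (N-1) · (m+2j)↓j`.
    calc ((m + 2 * j + 2) * (m ! * (m + j).descFactorial j)) ^ 2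
        = (m + 2 * j + 2) * m ! ^ 2 * (m + j).descFactorial j
            * ((m + 2 * j + 2) * (m + j).descFactorial j) := by ring
      _ ≤ (m + 2 * j + 2) * m ! ^ 2 * (m + j).descFactorial j
            * (2 * (m + 2 * j + 1) * (m + 2 * j).descFactorial j) := by
        gcongr (m + 2 * j + 2) * m ! ^ 2 * (m + j).descFactorial j * ?_
        exact Nat.mul_le_mul (by omega) hmono
      _ = _ := by ring

theorem chebCoeff_sq (n k : ℕ) :
    chebCoeff n k ^ 2 = 4 ^ n / (4 * 16 ^ k) * (n * (n - k - 1)! : ℝ) ^ 2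
      / (k ! * (n - 2 * k)! : ℝ) ^ 2 := by
  have hpow : (2 : ℝ) ^ ((n : ℤ) - 2 * k - 1) = 2 ^ n / (2 * 4 ^ k) := by
    rw [zpow_sub₀ two_ne_zero, zpow_sub₀ two_ne_zero, zpow_mul, zpow_natCast, zpow_natCast,
      zpow_one]
    norm_num
    ring
  have hsign : ((-1 : ℝ) ^ k) ^ 2 = 1 := by rw [← pow_mul, mul_comm, pow_mul, neg_one_sq, one_pow]
  calc chebCoeff n k ^ 2 = ((-1 : ℝ) ^ k) ^ 2 * (2 ^ n / (2 * 4 ^ k)) ^ 2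
        * (n * (n - k - 1)! : ℝ) ^ 2 / (k ! * (n - 2 * k)! : ℝ) ^ 2 := by
        rw [chebCoeff, hpow]
        ring
    _ = _ := by
        rw [hsign, show (4 : ℝ) ^ n = (2 ^ n) ^ 2 by rw [← pow_mul, mul_comm, pow_mul]; norm_num,
          show (16 : ℝ) ^ k = (4 ^ k) ^ 2 by rw [← pow_mul, mul_comm, pow_mul]; norm_num]
        ring

theorem chebCoeff_zero_sq {n : ℕ} (hn : n ≠ 0) : chebCoeff n 0 ^ 2 = 4 ^ n / 4 := by
  simp only [chebCoeff_sq, Nat.sub_zero, Nat.mul_zero, pow_zero, Nat.factorial_zero,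
    Nat.cast_one, one_mul, mul_one]
  rw [← Nat.cast_mul, Nat.mul_factorial_pred hn]
  have : (n ! : ℝ) ≠ 0 := by positivity
  field_simp

theorem mul_chebCoeff_sq_le {α : ℕ → ℝ} {l : ℝ} {n k : ℕ} (hαn : 0 < α n)
    (h : ∀ n k : ℕ, k ≤ n → α k / α n ≤ l ^ (n - k) * k ! / n !) (hk : 2 * k ≤ n) :
    α (n - 2 * k) * chebCoeff n k ^ 2 ≤ 4 ^ n / 4 * α n * (2 * (l ^ 2 / 16) ^ k / k !) := by
  have hα : α (n - 2 * k) ≤ α n * (l ^ 2) ^ k * (n - 2 * k)! / n ! := by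
    have := h n (n - 2 * k) (by omega)
    rw [Nat.sub_sub_self hk, div_le_iff₀ hαn, pow_mul] at this
    exact this.trans_eq (by ring)
  have hfac : (n * (n - k - 1)! : ℝ) ^ 2 ≤ 2 * n ! * (n - 2 * k)! := by
    exact_mod_cast sq_mul_factorial_le_two_mul_factorial_mul_factorial hk
  have hk1 : (1 : ℝ) ≤ k ! := by exact_mod_cast Nat.one_le_iff_ne_zero.mpr k.factorial_ne_zero
  rw [chebCoeff_sq]
  calc α (n - 2 * k) * (4 ^ n / (4 * 16 ^ k) * (n * (n - k - 1)! : ℝ) ^ 2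
        / (k ! * (n - 2 * k)! : ℝ) ^ 2)
      ≤ α n * (l ^ 2) ^ k * (n - 2 * k)! / n ! * (4 ^ n / (4 * 16 ^ k)
          * (2 * n ! * (n - 2 * k)!) / (k ! * (n - 2 * k)! : ℝ) ^ 2) := by
        gcongr
    _ = 4 ^ n / 4 * α n * (2 * (l ^ 2 / 16) ^ k / k ! ^ 2) := by
        rw [div_pow]
        field_simp
    _ ≤ 4 ^ n / 4 * α n * (2 * (l ^ 2 / 16) ^ k / k !) := by
        gcongr
        exact le_self_pow₀ hk1 two_ne_zero

theorem chebyshev_coeff_sum_bounds_general (α : ℕ → ℝ) (l : ℝ) (hα : ∀ k, 0 < α k)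
    (h : ∀ n k : ℕ, k ≤ n → α k / α n ≤ l ^ (n - k) * (k ! : ℝ) / (n ! : ℝ))
    (n : ℕ) (hn : 1 ≤ n) :
    (1 / 4 : ℝ) * 4 ^ n * α n ≤ ∑ k ∈ Finset.range (n / 2 + 1), α (n - 2 * k) * chebCoeff n k ^ 2
      ∧ ∑ k ∈ Finset.range (n / 2 + 1), α (n - 2 * k) * chebCoeff n k ^ 2
        ≤ (1 / 2 : ℝ) * Real.exp (l ^ 2 / 16) * 4 ^ n * α n := by
  constructor
  · calc (1 / 4 : ℝ) * 4 ^ n * α n = α (n - 2 * 0) * chebCoeff n 0 ^ 2 := by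
          rw [chebCoeff_zero_sq (by omega), Nat.mul_zero, Nat.sub_zero]
          ring
      _ ≤ _ := Finset.single_le_sum (f := fun k => α (n - 2 * k) * chebCoeff n k ^ 2)
          (fun k _ => mul_nonneg (hα _).le (sq_nonneg _)) (by simp)
  · calc ∑ k ∈ Finset.range (n / 2 + 1), α (n - 2 * k) * chebCoeff n k ^ 2
        ≤ ∑ k ∈ Finset.range (n / 2 + 1), 4 ^ n / 4 * α n * (2 * (l ^ 2 / 16) ^ k / k !) :=
          Finset.sum_le_sum fun k hk =>
            mul_chebCoeff_sq_le (hα n) h (by have := Finset.mem_range.mp hk; omega)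
      _ = 4 ^ n / 4 * α n * 2 * ∑ k ∈ Finset.range (n / 2 + 1), (l ^ 2 / 16) ^ k / k ! := by
          simp only [Finset.mul_sum, mul_div_assoc, mul_assoc]
      _ ≤ 4 ^ n / 4 * α n * 2 * Real.exp (l ^ 2 / 16) := by
          have hαn := (hα n).le
          gcongr
          exact Real.sum_le_exp_of_nonneg (by positivity) _
      _ = (1 / 2 : ℝ) * Real.exp (l ^ 2 / 16) * 4 ^ n * α n := by ring

theorem chebyshev_coeff_sum_bounds (α : ℕ → ℝ) (l : ℝ) (hl : 0 < l) (hα : ∀ k, 0 < α k)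
    (h : ∀ n k : ℕ, k ≤ n → α k / α n ≤ l ^ (n - k) * (k ! : ℝ) / (n ! : ℝ))
    (n : ℕ) (hn : 1 ≤ n) :
    (1 / 4 : ℝ) * 4 ^ n * α n ≤ ∑ k ∈ Finset.range (n / 2 + 1), α (n - 2 * k) * chebCoeff n k ^ 2
      ∧ ∑ k ∈ Finset.range (n / 2 + 1), α (n - 2 * k) * chebCoeff n k ^ 2
        ≤ (1 / 2 : ℝ) * Real.exp (l ^ 2 / 16) * 4 ^ n * α n :=
  chebyshev_coeff_sum_bounds_general α l hα h n hn
end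

section
/- For all integers n ≥ 0 and 0 ≤ k ≤ n, the quantity b_{n,k} = (k!/n!) · binomial(⌊(n−k)/2⌋ + k + 1/2, ⌊(n−k)/2⌋)² satisfies b_{n,k} ≤ 3/(⌊(n−k)/2⌋!)², where binomial(r, m) = r(r−1)···(r−m+1)/m! is the generalized binomial coefficient. -/
open Nat

/-- The generalized binomial coefficient `r(r−1)⋯(r−m+1)/m!` for real `r`. -/
noncomputable def gbinom (r : ℝ) (m : ℕ) : ℝ :=
  (∏ i ∈ Finset.range m, (r - i)) / (m ! : ℝ)

lemma key_ineq (k : ℕ) : ∀ m : ℕ,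
    (k ! : ℝ) * (∏ j ∈ Finset.range m, ((k : ℝ) + j + 3/2)) ^ 2
      ≤ 3 * ((k + 2 * m)! : ℝ) := by
  intro m
  induction m with
  | zero =>
    have h : (0:ℝ) < (k ! : ℝ) := by positivity
    simp
    nlinarith
  | succ m ih =>
    have hfac : ((k + 2 * (m + 1))! : ℝ)
        = ((k + 2 * m)! : ℝ) * ((k : ℝ) + 2 * m + 1) * ((k : ℝ) + 2 * m + 2) := by
      have : k + 2 * (m + 1) = (k + 2 * m + 1) + 1 := by ring
      rw [this, Nat.factorial_succ, Nat.factorial_succ]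
      push_cast
      ring
    rw [Finset.prod_range_succ, hfac]
    set P : ℝ := ∏ j ∈ Finset.range m, ((k : ℝ) + j + 3/2) with hP
    have hkfac : (0:ℝ) < (k ! : ℝ) := by positivity
    have hP2 : (0:ℝ) ≤ P ^ 2 := sq_nonneg _
    rcases Nat.eq_zero_or_pos m with hm | hm
    · subst hm
      simp only [Finset.range_zero, Finset.prod_empty] at hP
      rw [hP]
      simp only [Nat.mul_zero, Nat.add_zero] at *
      have hq : ((k:ℝ) + 0 + 3/2) ^ 2 ≤ 3 * (((k:ℝ) + 2*0 + 1) * ((k:ℝ) + 2*0 + 2)) := by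
        have : (0:ℝ) ≤ (k:ℝ) := Nat.cast_nonneg k
        nlinarith
      nlinarith [mul_le_mul_of_nonneg_left hq hkfac.le]
    · have hstep : ((k : ℝ) + m + 3/2) ^ 2 ≤ ((k : ℝ) + 2 * m + 1) * ((k : ℝ) + 2 * m + 2) := by
        have hm1 : (1:ℝ) ≤ (m : ℝ) := by exact_mod_cast hm
        nlinarith [Nat.cast_nonneg (α := ℝ) k]
      have hfacpos : (0:ℝ) < ((k + 2 * m)! : ℝ) := by positivity
      have hsq : (0:ℝ) ≤ ((k : ℝ) + m + 3/2) ^ 2 := sq_nonneg _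
      have := mul_le_mul ih hstep hsq (by positivity)
      push_cast
      nlinarith [this]

theorem bnk_le (n k : ℕ) (hk : k ≤ n) :
    ((k ! : ℝ) / (n ! : ℝ))
        * gbinom ((((n - k) / 2 : ℕ) : ℝ) + k + 1 / 2) ((n - k) / 2) ^ 2
      ≤ 3 / (((((n - k) / 2 : ℕ))! : ℝ)) ^ 2 := by
  set m : ℕ := (n - k) / 2 with hm
  -- reindex the product
  have hprod : (∏ i ∈ Finset.range m, (((m : ℝ) + k + 1/2) - i))
      = ∏ j ∈ Finset.range m, ((k : ℝ) + j + 3/2) := by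
    rw [← Finset.prod_range_reflect]
    apply Finset.prod_congr rfl
    intro j hj
    have hj' : j < m := Finset.mem_range.mp hj
    have : ((m - 1 - j : ℕ) : ℝ) = (m : ℝ) - 1 - j := by
      rw [Nat.sub_sub, Nat.cast_sub (by omega)]
      push_cast
      ring
    rw [this]
    ring
  have hkey := key_ineq k m
  have hle : k + 2 * m ≤ n := by
    have := Nat.div_mul_le_self (n - k) 2
    omega
  have hfle : ((k + 2 * m)! : ℝ) ≤ (n ! : ℝ) := by
    exact_mod_cast Nat.factorial_le hle
  have h1 : (k ! : ℝ) * (∏ j ∈ Finset.range m, ((k : ℝ) + j + 3/2)) ^ 2 ≤ 3 * (n ! : ℝ) := by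
    calc _ ≤ 3 * ((k + 2 * m)! : ℝ) := hkey
    _ ≤ 3 * (n ! : ℝ) := by linarith
  rw [gbinom, hprod]
  set P : ℝ := ∏ j ∈ Finset.range m, ((k : ℝ) + j + 3/2)
  rw [div_pow, _root_.div_mul_div_comm, div_le_div_iff₀ (by positivity) (by positivity)]
  have hmfac : (0:ℝ) < ((m)! : ℝ) ^ 2 := by positivity
  nlinarith [h1, hmfac]
end
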